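/- Normalization of the alternative death process representation: for θ > 0 and t > 0, with λ_k = k(θ + k − 1)/2, the transition probabilities d_m^θ(t) for m ≥ 0 given by d_m^θ(t) = Σ_{k ≥ m} e^{−λ_k t} (−1)^{k−m} C(k,m) (θ + 2k − 1)(θ + m)_{(k−1)} / k! for m ≥ 1, and d_0^θ(t) = 1 − Σ_{k ≥ 1} e^{−λ_k t}(−1)^{k−1}(θ + 2k − 1)(θ)_{(k−1)}/k!, satisfy Σ_{m ≥ 0} d_m^θ(t) = 1 (with all series absolutely convergent for t > 0). -/

import Mathlib

/-
For `k ≥ 1`, the `k`-th terms of the series `d_0, …, d_k` share the factor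
`e^{-λ_k t} (θ + 2k - 1) / k!`, and what remains is `(-1)^{k-m} C(k,m) (θ + m)_{(k-1)}`.
Summed over `m` this is the `k`-th forward difference of the polynomial `x ↦ (θ + x)_{(k-1)}`
of degree `k - 1`, hence zero: column by column, the terms of `1 - d_0` are the sums of the
terms of `d_1, d_2, …`. Exchanging the two summations is legitimate because every term in
column `k` is bounded by `e^{-λ_k t} (2(θ + 2k))^k`, there are at most `k` of them, and
`λ_k` grows quadratically, so `e^{-λ_k t}` beats `(C k)^k`.
-/

/-- The death process rates `λ_k = k(θ + k - 1)/2`. -/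
noncomputable def deathRate (θ : ℝ) (k : ℕ) : ℝ := k * (θ + k - 1) / 2

/-- The `k`-th term of the series defining `d_m^θ(t)` for `m ≥ 1`. -/
noncomputable def dTerm (θ t : ℝ) (m k : ℕ) : ℝ :=
  if m ≤ k then
    Real.exp (-(deathRate θ k) * t) * (-1 : ℝ) ^ (k - m) * (k.choose m) *
      (θ + 2 * k - 1) * (∏ i ∈ Finset.range (k - 1), (θ + m + i)) / (k.factorial)
  else 0

/-- The `k`-th term of the series defining `1 - d_0^θ(t)`. -/
noncomputable def dTerm0 (θ t : ℝ) (k : ℕ) : ℝ :=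
  if 1 ≤ k then
    Real.exp (-(deathRate θ k) * t) * (-1 : ℝ) ^ (k - 1) *
      (θ + 2 * k - 1) * (∏ i ∈ Finset.range (k - 1), (θ + i)) / (k.factorial)
  else 0

/-- The transition probabilities `d_m^θ(t)` of the block-counting death process of
Kingman's coalescent with mutation, started at infinity. -/
noncomputable def dFV (θ t : ℝ) (m : ℕ) : ℝ :=
  if m = 0 then 1 - ∑' k : ℕ, dTerm0 θ t k else ∑' k : ℕ, dTerm θ t m k

open Finset Filter Polynomial Real

lemma ascPochhammer_eval_eq_prod_range {R : Type*} [CommSemiring R] (n : ℕ) (x : R) :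
    (ascPochhammer R n).eval x = ∏ i ∈ range n, (x + i) := by
  induction n with
  | zero => simp
  | succ n ih => rw [ascPochhammer_succ_eval, ih, prod_range_succ]

theorem sum_range_neg_one_pow_mul_choose_mul_ascPochhammer_eval_eq_zero {R : Type*}
    [CommRing R] [IsDomain R] {n k : ℕ} (hnk : n < k) (x : R) :
    ∑ m ∈ range (k + 1), (-1) ^ (k - m) * k.choose m * (ascPochhammer R n).eval (x + m) =
      0 := by
  have h := congr_fun (fwdDiff_iter_eq_zero_of_degree_lt
    ((ascPochhammer_natDegree R n).trans_lt hnk)) x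
  rw [fwdDiff_iter_eq_sum_shift] at h
  simpa [zsmul_eq_mul] using h

lemma dTerm_eq_zero_of_lt {θ t : ℝ} {m k : ℕ} (h : k < m) : dTerm θ t m k = 0 :=
  if_neg h.not_ge

lemma dTerm0_eq_neg_dTerm_zero (θ t : ℝ) {k : ℕ} (hk : 0 < k) :
    dTerm0 θ t k = -dTerm θ t 0 k := by
  obtain ⟨j, rfl⟩ := Nat.exists_eq_add_one_of_ne_zero hk.ne'
  rw [dTerm0, dTerm, if_pos (Nat.le_add_left 1 j), if_pos (Nat.zero_le _), Nat.add_sub_cancel,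
    Nat.sub_zero, pow_succ, Nat.choose_zero_right]
  push_cast
  ring

lemma sum_range_dTerm_eq_zero (θ t : ℝ) {k : ℕ} (hk : 0 < k) :
    ∑ m ∈ range (k + 1), dTerm θ t m k = 0 := by
  have h := sum_range_neg_one_pow_mul_choose_mul_ascPochhammer_eval_eq_zero (R := ℝ)
    (Nat.sub_lt hk one_pos) θ
  simp only [ascPochhammer_eval_eq_prod_range] at h
  calc ∑ m ∈ range (k + 1), dTerm θ t m k
      = exp (-deathRate θ k * t) * (θ + 2 * k - 1) / k.factorial *
          ∑ m ∈ range (k + 1), (-1) ^ (k - m) * k.choose m *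
            ∏ i ∈ range (k - 1), (θ + m + i) := by
        rw [mul_sum]
        refine sum_congr rfl fun m hm => ?_
        rw [dTerm, if_pos (Nat.lt_succ_iff.mp (mem_range.mp hm))]
        ring
    _ = 0 := by rw [h, mul_zero]

theorem tsum_dTerm_succ (θ t : ℝ) (k : ℕ) : ∑' m, dTerm θ t (m + 1) k = dTerm0 θ t k := by
  rw [tsum_eq_sum (s := range k) fun m hm => dTerm_eq_zero_of_lt (by simpa using hm)]
  rcases Nat.eq_zero_or_pos k with rfl | hk
  · simp [dTerm0]
  · have h := sum_range_dTerm_eq_zero θ t hk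
    rw [sum_range_succ'] at h
    rw [dTerm0_eq_neg_dTerm_zero θ t hk]
    linarith

lemma abs_dTerm_le_of_pos_right {θ : ℝ} (hθ : 0 ≤ θ) (t : ℝ) (m : ℕ) {k : ℕ}
    (hk : 0 < k) :
    |dTerm θ t m k| ≤ exp (-deathRate θ k * t) * (2 * (θ + 2 * k)) ^ k := by
  unfold dTerm
  split_ifs with hmk
  · obtain ⟨j, rfl⟩ := Nat.exists_eq_add_of_le' hk
    have hm : (m : ℝ) ≤ j + 1 := by exact_mod_cast hmk
    have hchoose : ((j + 1).choose m : ℝ) ≤ 2 ^ (j + 1) := by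
      exact_mod_cast Nat.choose_le_two_pow (j + 1) m
    have hfactor : ∀ i ∈ range j, θ + m + i ≤ θ + 2 * (j + 1 : ℕ) := fun i hi => by
      have : (i : ℝ) < j := by exact_mod_cast mem_range.mp hi
      push_cast
      linarith
    have hprod : ∏ i ∈ range j, (θ + m + i) ≤ (θ + 2 * (j + 1 : ℕ)) ^ j := by
      simpa using prod_le_prod (fun i _ => by positivity) hfactor
    have hfact : (1 : ℝ) ≤ (j + 1).factorial := by exact_mod_cast (j + 1).factorial_pos
    calc |exp (-deathRate θ (j + 1) * t) * (-1) ^ (j + 1 - m) * ((j + 1).choose m : ℝ) *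
            (θ + 2 * (j + 1 : ℕ) - 1) * (∏ i ∈ range (j + 1 - 1), (θ + m + i)) /
            (j + 1).factorial|
        = exp (-deathRate θ (j + 1) * t) * ((j + 1).choose m : ℝ) *
            (θ + 2 * (j + 1 : ℕ) - 1) * (∏ i ∈ range j, (θ + m + i)) /
            (j + 1).factorial := by
          rw [abs_div, abs_mul, abs_mul, abs_mul, abs_mul, abs_pow, abs_neg, abs_one, one_pow,
            mul_one, abs_exp, Nat.abs_cast, Nat.abs_cast, abs_of_nonneg (by push_cast; linarith),
            abs_of_nonneg (prod_nonneg fun i _ => by positivity), Nat.add_sub_cancel]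
      _ ≤ exp (-deathRate θ (j + 1) * t) * 2 ^ (j + 1) * (θ + 2 * (j + 1 : ℕ)) *
            (θ + 2 * (j + 1 : ℕ)) ^ j / 1 := by
          gcongr
          · push_cast; linarith
          · linarith
      _ = exp (-deathRate θ (j + 1) * t) * (2 * (θ + 2 * (j + 1 : ℕ))) ^ (j + 1) := by
          rw [div_one, mul_pow, pow_succ (θ + _) j]
          ring
  · rw [abs_zero]
    positivity

lemma abs_dTerm_le_of_pos_left {θ : ℝ} (hθ : 0 ≤ θ) (t : ℝ) {m : ℕ} (hm : 0 < m)
    (k : ℕ) :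
    |dTerm θ t m k| ≤ exp (-deathRate θ k * t) * (2 * (θ + 2 * k)) ^ k := by
  rcases Nat.eq_zero_or_pos k with rfl | hk
  · simp [dTerm_eq_zero_of_lt hm, exp_nonneg]
  · exact abs_dTerm_le_of_pos_right hθ t m hk

lemma abs_dTerm0_le {θ : ℝ} (hθ : 0 ≤ θ) (t : ℝ) (k : ℕ) :
    |dTerm0 θ t k| ≤ exp (-deathRate θ k * t) * (2 * (θ + 2 * k)) ^ k := by
  rcases Nat.eq_zero_or_pos k with rfl | hk
  · simp [dTerm0, exp_nonneg]
  · rw [dTerm0_eq_neg_dTerm_zero θ t hk, abs_neg]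
    exact abs_dTerm_le_of_pos_right hθ t 0 hk

theorem summable_of_norm_le_exp_mul_of_tendsto_atBot {E : Type*} [NormedAddCommGroup E]
    [CompleteSpace E] {f : ℕ → E} {φ : ℕ → ℝ} (hφ : Tendsto φ atTop atBot)
    (hf : ∀ᶠ k in atTop, ‖f k‖ ≤ exp (k * φ k)) : Summable f := by
  refine (summable_geometric_of_lt_one (exp_pos (-1)).le
    (exp_lt_one_iff.mpr neg_one_lt_zero)).of_norm_bounded_eventually_nat ?_
  filter_upwards [hf, hφ.eventually_le_atBot (-1)] with k hfk hφk
  calc ‖f k‖ ≤ exp (k * φ k) := hfk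
    _ ≤ exp (k * -1) := by gcongr
    _ = exp (-1) ^ k := exp_nat_mul _ _

lemma eventually_pos_add_two_mul (θ : ℝ) : ∀ᶠ k : ℕ in atTop, 0 < θ + 2 * k := by
  filter_upwards [eventually_gt_atTop ⌈-θ⌉₊] with k hk
  have := Nat.lt_of_ceil_lt hk
  have : (0 : ℝ) ≤ k := k.cast_nonneg
  linarith

lemma tendsto_neg_mul_add_log_atBot (θ : ℝ) {t c : ℝ} (ht : 0 < t) (hc : 0 < c) :
    Tendsto (fun k : ℕ => -(θ + k - 1) * t / 2 + log (c * (θ + 2 * k))) atTop atBot := by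
  obtain ⟨s, hs, hsc⟩ : ∃ s : ℝ, 0 < s ∧ s * c = t / 8 :=
    ⟨t / (8 * c), by positivity, by field_simp⟩
  have hlin : Tendsto (fun k : ℕ => (-(θ - 1) * t / 2 + t * θ / 8 - 1 - log s) + -(t / 4) * k)
      atTop atBot :=
    tendsto_atBot_add_const_left _ _
      (tendsto_natCast_atTop_atTop.const_mul_atTop_of_neg (by linarith))
  refine tendsto_atBot_mono' _ ?_ hlin
  filter_upwards [eventually_pos_add_two_mul θ] with k hk
  -- `log y = log (s y) - log s ≤ s y - 1 - log s`, and `s` is chosen so that `s y ≈ t k / 4`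
  have hlog : log (c * (θ + 2 * k)) ≤ t / 8 * (θ + 2 * k) - 1 - log s := by
    have := log_le_sub_one_of_pos (mul_pos hs (mul_pos hc hk))
    rw [log_mul hs.ne' (mul_pos hc hk).ne', ← mul_assoc, hsc] at this
    linarith
  linarith

theorem summable_exp_neg_deathRate_mul_pow (θ : ℝ) {t c : ℝ} (ht : 0 < t) (hc : 0 < c) :
    Summable fun k : ℕ => exp (-deathRate θ k * t) * (c * (θ + 2 * k)) ^ k := by
  refine summable_of_norm_le_exp_mul_of_tendsto_atBot (tendsto_neg_mul_add_log_atBot θ ht hc) ?_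
  filter_upwards [eventually_pos_add_two_mul θ] with k hk
  have hy : 0 < c * (θ + 2 * k) := mul_pos hc hk
  have hexponent : (k : ℝ) * (-(θ + k - 1) * t / 2 + log (c * (θ + 2 * k)))
      = -deathRate θ k * t + k * log (c * (θ + 2 * k)) := by
    rw [deathRate]; ring
  rw [norm_of_nonneg (by positivity), hexponent, exp_add, exp_nat_mul, exp_log hy]

lemma summable_natCast_mul_exp_neg_deathRate_mul_pow {θ t : ℝ} (hθ : 0 ≤ θ) (ht : 0 < t) :
    Summable fun k : ℕ => k * (exp (-deathRate θ k * t) * (2 * (θ + 2 * k)) ^ k) := by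
  refine (summable_exp_neg_deathRate_mul_pow θ ht four_pos).of_nonneg_of_le
    (fun k => by positivity) fun k => ?_
  have hk : (k : ℝ) ≤ 2 ^ k := by exact_mod_cast Nat.lt_two_pow_self.le
  calc (k : ℝ) * (exp (-deathRate θ k * t) * (2 * (θ + 2 * k)) ^ k)
      ≤ 2 ^ k * (exp (-deathRate θ k * t) * (2 * (θ + 2 * k)) ^ k) := by gcongr
    _ = exp (-deathRate θ k * t) * (4 * (θ + 2 * k)) ^ k := by
      rw [mul_left_comm, ← mul_pow, ← mul_assoc]
      norm_num

theorem summable_uncurry_of_abs_le {F : ℕ → ℕ → ℝ} {g : ℕ → ℝ}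
    (hF : ∀ m k, k ≤ m → F m k = 0) (hFg : ∀ m k, m < k → |F m k| ≤ g k)
    (hg : Summable fun k : ℕ => k * g k) : Summable (Function.uncurry F) := by
  have hrow : ∀ k, ∀ m ∉ range k, |F m k| = 0 := fun k m hm => by
    rw [hF m k (by simpa using hm), abs_zero]
  rw [← summable_abs_iff, ← (Equiv.prodComm ℕ ℕ).summable_iff]
  refine (summable_prod_of_nonneg fun _ => abs_nonneg _).2
    ⟨fun k => summable_of_ne_finset_zero (hrow k), ?_⟩
  refine hg.of_nonneg_of_le (fun k => tsum_nonneg fun _ => abs_nonneg _) fun k => ?_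
  calc ∑' m, |F m k| = ∑ m ∈ range k, |F m k| := tsum_eq_sum (hrow k)
    _ ≤ ∑ m ∈ range k, g k := sum_le_sum fun m hm => hFg m k (mem_range.mp hm)
    _ = k * g k := by rw [sum_const, card_range, nsmul_eq_mul]

theorem dFV_sums_to_one (θ t : ℝ) (hθ : 0 < θ) (ht : 0 < t) :
    (∀ m : ℕ, 1 ≤ m → Summable fun k : ℕ => |dTerm θ t m k|) ∧
    (Summable fun k : ℕ => |dTerm0 θ t k|) ∧
    (Summable fun m : ℕ => dFV θ t m) ∧
    ∑' m : ℕ, dFV θ t m = 1 := by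
  have hg := summable_exp_neg_deathRate_mul_pow θ ht two_pos
  have hF : Summable (Function.uncurry fun m k => dTerm θ t (m + 1) k) :=
    summable_uncurry_of_abs_le (fun m k hkm => dTerm_eq_zero_of_lt (Nat.lt_succ_of_le hkm))
      (fun m k _ => abs_dTerm_le_of_pos_left hθ.le t m.succ_pos k)
      (summable_natCast_mul_exp_neg_deathRate_mul_pow hθ.le ht)
  have hsucc : HasSum (fun m => dFV θ t (m + 1)) (∑' k, dTerm0 θ t k) := by
    have hrows (m : ℕ) : dFV θ t (m + 1) = ∑' k, dTerm θ t (m + 1) k := if_neg m.succ_ne_zero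
    simp only [hrows]
    rw [← tsum_congr (tsum_dTerm_succ θ t), hF.tsum_comm]
    exact hF.prod.hasSum
  have hdFV : HasSum (dFV θ t) 1 := by
    rw [← hasSum_nat_add_iff' 1]
    simpa [dFV] using hsucc
  exact ⟨fun m hm =>
      hg.of_nonneg_of_le (fun _ => abs_nonneg _) (abs_dTerm_le_of_pos_left hθ.le t hm),
    hg.of_nonneg_of_le (fun _ => abs_nonneg _) (abs_dTerm0_le hθ.le t), hdFV.summable,
    hdFV.tsum_eq⟩
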